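/- There is no additively stable subset of Φ of cardinality 5. -/

import Mathlib

def Phi : Finset (ℤ × ℤ) := {(1,0),(0,1),(1,-1),(0,-1),(-1,1),(-1,0)}

def addStable (E : Finset (ℤ × ℤ)) : Prop :=
  (AddSubmonoid.closure (E : Set (ℤ × ℤ)) : Set (ℤ × ℤ)) ∩ (Phi : Set (ℤ × ℤ)) = (E : Set (ℤ × ℤ))

/-! A five-element subset of `Phi` is `Phi` with one vector `x` removed, and every vector of `Phi`
is the sum of two others (e.g. `(1,0) = (1,-1) + (0,1)`), so `Phi.erase x` is not additively stable. -/

theorem addStable.add_mem {E : Finset (ℤ × ℤ)} (hE : addStable E) {a b : ℤ × ℤ}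
    (ha : a ∈ E) (hb : b ∈ E) (hab : a + b ∈ Phi) : a + b ∈ E := by
  have hclosure : a + b ∈ AddSubmonoid.closure (E : Set (ℤ × ℤ)) :=
    AddSubmonoid.add_mem _ (AddSubmonoid.subset_closure ha) (AddSubmonoid.subset_closure hb)
  have : a + b ∈ (E : Set (ℤ × ℤ)) := hE ▸ ⟨hclosure, hab⟩
  exact_mod_cast this

theorem exists_add_eq_of_mem_Phi {x : ℤ × ℤ} (hx : x ∈ Phi) :
    ∃ a ∈ Phi.erase x, ∃ b ∈ Phi.erase x, a + b = x := by
  revert x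
  decide

theorem not_addStable_Phi_erase {x : ℤ × ℤ} (hx : x ∈ Phi) : ¬ addStable (Phi.erase x) := by
  intro hstable
  obtain ⟨a, ha, b, hb, rfl⟩ := exists_add_eq_of_mem_Phi hx
  exact Finset.notMem_erase _ _ (hstable.add_mem ha hb hx)

theorem Phi_card : Phi.card = 6 := by decide

theorem stmt_9 : ∀ E : Finset (ℤ × ℤ), E ⊆ Phi → E.card = 5 → ¬ addStable E := by
  intro E hsub hcard
  obtain ⟨x, hxPhi, hxE⟩ := Finset.exists_mem_notMem_of_card_lt_card (s := E) (t := Phi)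
    (by rw [hcard, Phi_card]; norm_num)
  have hE : E = Phi.erase x := Finset.eq_of_subset_of_card_le
    (Finset.subset_erase.2 ⟨hsub, hxE⟩) (by rw [Finset.card_erase_of_mem hxPhi, Phi_card, hcard])
  exact hE ▸ not_addStable_Phi_erase hxPhi
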